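/- Assume n > 0 or m > 2, and let t be a near-unanimity polymorphism of 𝔄 of arity m^{2^n}. Then for every k ∈ {0, 1, ..., 2^n − 1} and every permutation σ of the coordinate set {1, ..., m^{2^n}}, t applied to the tuple v_k with coordinates permuted by σ is different from a. -/
import Mathlib

/- The universe `A = {a, 0, 1, ..., n}` of size `n+2` is encoded as `Fin (n+2)`,
where `a` is encoded as `0` and the element `i ∈ {0, ..., n}` is encoded as `i+1`;
this encoding is order-preserving for the order `a < 0 < 1 < ⋯ < n`. -/

/-- A `k`-ary operation `t` is compatible with (preserves) an `r`-ary relation `S`: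
applying `t` coordinatewise to `k` tuples from `S` yields a tuple in `S`. -/
def Compat {A : Type*} {k r : ℕ} (t : (Fin k → A) → A) (S : Set (Fin r → A)) : Prop :=
  ∀ u : Fin k → Fin r → A, (∀ j, u j ∈ S) → (fun i => t fun j => u j i) ∈ S

/-- Compatibility with a unary relation `X`: `t` maps `X^k` into `X`. -/
def CompatUnary {A : Type*} {k : ℕ} (t : (Fin k → A) → A) (X : Set A) : Prop :=
  ∀ u : Fin k → A, (∀ j, u j ∈ X) → t u ∈ X

/-- Compatibility with a binary relation, given as a set of pairs. -/
def Compat2 {A : Type*} {k : ℕ} (t : (Fin k → A) → A) (S : Set (A × A)) : Prop :=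
  ∀ u w : Fin k → A, (∀ j, (u j, w j) ∈ S) → (t u, t w) ∈ S

/-- An operation `t : A^k → A` is a near-unanimity (NU) operation if `k ≥ 3` and
any tuple whose coordinates all equal `x` except possibly one coordinate (with
value `y`) is mapped to the majority value `x`. -/
def IsNU {A : Type*} {k : ℕ} (t : (Fin k → A) → A) : Prop :=
  3 ≤ k ∧ ∀ (x y : A) (j : Fin k), t (Function.update (fun _ => x) j y) = x

/-- The `(m+1)`-ary relation `S_i`: all tuples `(x_0, …, x_m)` with
`x_0 ∈ {a,0,…,i-1}` (encoded value `≤ i`) and `x_1, …, x_m ∈ {a, i}` (encoded value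
`0` or `i+1`), except the tuple `(a, i, …, i)`, together with the constant tuples
`(j, …, j)` for `j ∈ {i+1, …, n}` (encoded value `≥ i+2`). -/
def Srel (n m i : ℕ) : Set (Fin (m + 1) → Fin (n + 2)) :=
  {x | ((x 0).val ≤ i ∧ (∀ j, j ≠ 0 → ((x j).val = 0 ∨ (x j).val = i + 1)) ∧
          ¬((x 0).val = 0 ∧ ∀ j, j ≠ 0 → (x j).val = i + 1)) ∨
        (∃ c : Fin (n + 2), i + 2 ≤ c.val ∧ ∀ j, x j = c)}

/-- A polymorphism of the structure `𝔄 = (A; S_0, …, S_n, (X)_{∅ ≠ X ⊆ A})`: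
an operation compatible with each `S_i` and with every nonempty unary relation. -/
def PolyA (n m : ℕ) {k : ℕ} (t : (Fin k → Fin (n + 2)) → Fin (n + 2)) : Prop :=
  (∀ i ≤ n, Compat t (Srel n m i)) ∧
  (∀ X : Set (Fin (n + 2)), X.Nonempty → CompatUnary t X)

/-- `I(k, i)` for `i ∈ {0, …, n-1}`: with `b_i` the `i`-th binary digit of `k`,
`I(k, i) = (1 - b_i) · m ^ e · (m ^ (2^i) - 1)` where
`e = (the integer with binary representation b_{n-1}…b_{i+1} followed by i+1 zeros) + 2^i`. -/
def Inum (m k i : ℕ) : ℕ :=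
  (1 - (if Nat.testBit k i then 1 else 0)) *
    m ^ (k / 2 ^ (i + 1) * 2 ^ (i + 1) + 2 ^ i) * (m ^ 2 ^ i - 1)

/-- `cum m k j = I(k, a) + I(k, 0) + ⋯ + I(k, j-1)`, the position where the block of
`j`'s starts in the tuple `v_k` (with `I(k, a) = m^(k+1)`). -/
def cum (m k j : ℕ) : ℕ := m ^ (k + 1) + ∑ u ∈ Finset.range j, Inum m k u

/-- The tuple `v_k ∈ A^(m^(2^n))`: `I(k, a)` copies of `a`, then `I(k, 0)` copies of
`0`, …, then `I(k, n-1)` copies of `n-1`.  The coordinate at position `q` is `a`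
(encoded `0`) if `q < I(k, a)`, and the element `j` (encoded `j+1`) if
`cum m k j ≤ q < cum m k (j+1)`; since `cum` is monotone, this encoded value is
exactly the number of `j ∈ {0, …, n-1}` with `cum m k j ≤ q`. -/
def vk (n m k : ℕ) (q : Fin (m ^ 2 ^ n)) : Fin (n + 2) :=
  ⟨((Finset.range n).filter (fun j => cum m k j ≤ q.val)).card, by
    have h : ((Finset.range n).filter (fun j => cum m k j ≤ q.val)).card ≤ n := by
      calc ((Finset.range n).filter (fun j => cum m k j ≤ q.val)).card
          ≤ (Finset.range n).card := Finset.card_filter_le _ _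
        _ = n := Finset.card_range n
    omega⟩

namespace Stmt6Aux

lemma mod_pow_succ (k i : ℕ) : k % 2^(i+1) = k % 2^i + 2^i * (k / 2^i % 2) := by
  rw [pow_succ, Nat.mod_mul]

lemma mod_of_bits (k : ℕ) : ∀ i, (∀ j, j < i → Nat.testBit k j = true) → k % 2^i = 2^i - 1 := by
  intro i
  induction i with
  | zero => simp [Nat.mod_one]
  | succ i ih =>
    intro h
    have hb : k / 2^i % 2 = 1 := by
      have h0 := h i (Nat.lt_succ_self i)
      rw [Nat.testBit_eq_decide_div_mod_eq] at h0; simpa using h0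
    have h1 : k % 2^i = 2^i - 1 := ih (fun j hj => h j (by omega))
    have h2 := mod_pow_succ k i
    rw [hb, mul_one, h1] at h2
    have h3 : 0 < 2^i := Nat.two_pow_pos i
    have hp : 2^(i+1) = 2*2^i := by ring
    omega

lemma cum_succ (m k j : ℕ) : cum m k (j+1) = cum m k j + Inum m k j := by
  simp [cum, Finset.sum_range_succ, Nat.add_assoc]

lemma cum_eq (m : ℕ) (hm : 1 ≤ m) (k : ℕ) : ∀ j, cum m k j = m ^ (k / 2^j * 2^j + 2^j) := by
  intro j
  induction j with
  | zero => simp [cum]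
  | succ j ih =>
    rw [cum_succ, ih, Inum]
    have hsplit : k / 2^j = 2 * (k / 2^(j+1)) + k / 2^j % 2 := by
      have h1 : k / 2^j / 2 = k / 2^(j+1) := by
        rw [Nat.div_div_eq_div_mul, ← pow_succ]
      have h2 := Nat.div_add_mod (k / 2^j) 2
      omega
    rcases Nat.eq_zero_or_pos (k / 2^j % 2) with hb | hb
    · have ht : Nat.testBit k j = false := by
        rw [Nat.testBit_eq_decide_div_mod_eq]; simp [hb]
      rw [ht]
      simp only [Bool.false_eq_true, if_false, Nat.sub_zero, one_mul]
      have hexp : k / 2^j * 2^j = k / 2^(j+1) * 2^(j+1) := by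
        rw [hsplit, hb]; ring
      rw [hexp]
      have h1 : 1 ≤ m ^ 2^j := Nat.one_le_pow _ _ hm
      set e := k / 2^(j+1) * 2^(j+1) with he
      have hmain : m ^ (e + 2^j) * (m ^ 2^j - 1) = m ^ (e + 2^j + 2^j) - m ^ (e + 2^j) := by
        rw [Nat.mul_sub, mul_one, ← pow_add]
      rw [hmain]
      have hle : m ^ (e + 2^j) ≤ m ^ (e + 2^j + 2^j) :=
        Nat.pow_le_pow_right hm (Nat.le_add_right _ _)
      have hgoal : e + 2^(j+1) = e + 2^j + 2^j := by
        have : 2^(j+1) = 2^j + 2^j := by ring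
        omega
      rw [hgoal]
      omega
    · have hb1 : k / 2^j % 2 = 1 := by omega
      have ht : Nat.testBit k j = true := by
        rw [Nat.testBit_eq_decide_div_mod_eq]; simp [hb1]
      rw [ht]
      simp only [if_true, Nat.sub_self, zero_mul]
      have hexp : k / 2^j * 2^j + 2^j = k / 2^(j+1) * 2^(j+1) + 2^(j+1) := by
        rw [hsplit, hb1]; ring
      rw [hexp, Nat.add_zero]

lemma cum_mono (m k : ℕ) {j j' : ℕ} (h : j ≤ j') : cum m k j ≤ cum m k j' := by
  unfold cum
  exact Nat.add_le_add_left (Finset.sum_le_sum_of_subset (Finset.range_subset_range.2 h)) _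

lemma cum_zero (m k : ℕ) : cum m k 0 = m ^ (k+1) := by simp [cum]

lemma vk_card (n m k : ℕ) (q : Fin (m ^ 2 ^ n)) :
    (vk n m k q).val = ((Finset.range n).filter (fun j => cum m k j ≤ q.val)).card := rfl

lemma vk_le_n (n m k : ℕ) (q : Fin (m ^ 2 ^ n)) : (vk n m k q).val ≤ n := by
  rw [vk_card]
  calc ((Finset.range n).filter (fun j => cum m k j ≤ q.val)).card
      ≤ (Finset.range n).card := Finset.card_filter_le _ _
    _ = n := Finset.card_range n

lemma vk_le (n m k j : ℕ) (q : Fin (m ^ 2 ^ n)) (h : q.val < cum m k j) :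
    (vk n m k q).val ≤ j := by
  rw [vk_card]
  have hsub : (Finset.range n).filter (fun u => cum m k u ≤ q.val) ⊆ Finset.range j := by
    intro u hu
    simp only [Finset.mem_filter, Finset.mem_range] at hu ⊢
    by_contra hc
    push_neg at hc
    have := le_trans (cum_mono m k hc) hu.2
    omega
  calc _ ≤ (Finset.range j).card := Finset.card_le_card hsub
    _ = j := Finset.card_range j

lemma vk_ge (n m k j : ℕ) (q : Fin (m ^ 2 ^ n)) (hj : j < n) (h : cum m k j ≤ q.val) :
    j < (vk n m k q).val := by
  rw [vk_card]
  have hsub : Finset.range (j+1) ⊆ (Finset.range n).filter (fun u => cum m k u ≤ q.val) := by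
    intro u hu
    simp only [Finset.mem_range] at hu
    simp only [Finset.mem_filter, Finset.mem_range]
    exact ⟨by omega, le_trans (cum_mono m k (by omega)) h⟩
  have := Finset.card_le_card hsub
  simp only [Finset.card_range] at this
  omega

def bs (L d p : ℕ) : ℕ :=
  if p < L then p + d else if d ≤ p ∧ p < d + L then p - d else p

lemma bs_invol (L d : ℕ) (hd : d = 0 ∨ L ≤ d) (p : ℕ) : bs L d (bs L d p) = p := by
  unfold bs; split_ifs <;> omega

lemma bs_lt (L d p M : ℕ) (hp : p < M) (h1 : d + L ≤ M) : bs L d p < M := by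
  unfold bs; split_ifs <;> omega

lemma bs_eq_self (L d p : ℕ) (h : d + L ≤ p) (h2 : L ≤ p) : bs L d p = p := by
  unfold bs; split_ifs <;> omega

lemma bs_mem (L d p : ℕ) (hd : d = 0 ∨ L ≤ d) (h1 : d ≤ p) (h2 : p < d + L) :
    bs L d p = p - d := by
  unfold bs; split_ifs <;> omega

def blockSwap (N L d : ℕ) (h1 : d + L ≤ N) (hd : d = 0 ∨ L ≤ d) : Equiv.Perm (Fin N) :=
  Function.Involutive.toPerm
    (fun p => ⟨bs L d p.val, bs_lt L d p.val N p.isLt h1⟩)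
    (fun p => Fin.ext (bs_invol L d hd p.val))

lemma blockSwap_apply (N L d : ℕ) (h1 : d + L ≤ N) (hd : d = 0 ∨ L ≤ d) (p : Fin N) :
    (blockSwap N L d h1 hd p).val = bs L d p.val := rfl

lemma base (n m : ℕ) (hm : 2 ≤ m)
    (t : (Fin (m ^ 2 ^ n) → Fin (n + 2)) → Fin (n + 2))
    (htpoly : PolyA n m t) (htNU : IsNU t) (σ : Equiv.Perm (Fin (m ^ 2 ^ n))) :
    t (fun q => vk n m 0 (σ q)) ≠ 0 := by
  intro hc
  have hm1 : 1 ≤ m := by omega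
  have hmN : m ≤ m ^ 2 ^ n := by
    calc m = m ^ 1 := (pow_one m).symm
    _ ≤ m ^ 2 ^ n := Nat.pow_le_pow_right hm1 Nat.one_le_two_pow
  have hcum0 : cum m 0 0 = m := by rw [cum_zero, pow_one]
  set u : Fin (m ^ 2 ^ n) → Fin (m+1) → Fin (n+2) := fun q ℓ =>
    if ℓ = 0 then vk n m 0 (σ q)
    else if (σ q).val + 1 = ℓ.val then 0 else ⟨n+1, by omega⟩ with hu
  have hrows : ∀ q, u q ∈ Srel n m n := by
    intro q
    left
    refine ⟨?_, ?_, ?_⟩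
    · simp only [hu, if_pos rfl]
      exact vk_le_n n m 0 (σ q)
    · intro j hj
      simp only [hu, if_neg hj]
      split_ifs with h
      · left; rfl
      · right; rfl
    · rintro ⟨h0, hall⟩
      simp only [hu, if_pos rfl] at h0
      have hq : (σ q).val < m := by
        by_contra hge
        push_neg at hge
        rcases Nat.eq_zero_or_pos n with hn | hn
        · have hlt := (σ q).isLt
          have hpow : m ^ 2 ^ n = m := by rw [hn, pow_zero, pow_one]
          omega
        · have := vk_ge n m 0 0 (σ q) hn (by omega)
          omega
      set ℓ0 : Fin (m+1) := ⟨(σ q).val + 1, by omega⟩ with hℓ0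
      have hne : ℓ0 ≠ 0 := by
        intro h
        have := congrArg Fin.val h
        simp [hℓ0] at this
      have h5 : (u q ℓ0).val = 0 := by
        simp [hu, if_neg hne, hℓ0]
      have h6 := hall ℓ0 hne
      omega
  have hcomp := htpoly.1 n le_rfl u hrows
  have hcol0 : t (fun q => u q 0) = 0 := by
    have : (fun q => u q 0) = fun q => vk n m 0 (σ q) := by
      funext q; simp only [hu, if_pos rfl]
    rw [this, hc]
  have hcolℓ : ∀ ℓ : Fin (m+1), ℓ ≠ 0 → t (fun q => u q ℓ) = ⟨n+1, by omega⟩ := by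
    intro ℓ hℓ
    have hℓ1 : 1 ≤ ℓ.val := by
      rcases Nat.eq_zero_or_pos ℓ.val with h | h
      · exact absurd (Fin.ext h) hℓ
      · exact h
    have hℓm : ℓ.val ≤ m := by omega
    set q0 : Fin (m ^ 2 ^ n) := σ.symm ⟨ℓ.val - 1, by omega⟩ with hq0
    have heq : (fun q => u q ℓ) = Function.update (fun _ => (⟨n+1, by omega⟩ : Fin (n+2))) q0 0 := by
      funext q
      rw [Function.update_apply]
      by_cases hq : q = q0
      · rw [if_pos hq, hq]
        have hσ : (σ q0).val = ℓ.val - 1 := by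
          rw [hq0, Equiv.apply_symm_apply]
        simp only [hu, if_neg hℓ]
        rw [if_pos (by omega)]
      · rw [if_neg hq]
        have hσ : (σ q).val + 1 ≠ ℓ.val := by
          intro h
          apply hq
          apply σ.injective
          rw [hq0, Equiv.apply_symm_apply]
          apply Fin.ext
          show (σ q).val = ℓ.val - 1
          omega
        simp only [hu, if_neg hℓ, if_neg hσ]
    rw [heq]
    exact htNU.2 _ 0 q0
  simp only [Srel, Set.mem_setOf_eq] at hcomp
  rcases hcomp with ⟨-, -, h3⟩ | ⟨c, hc2, hall⟩
  · apply h3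
    constructor
    · show (t fun q => u q 0).val = 0
      rw [hcol0]
      rfl
    · intro j hj
      show (t fun q => u q j).val = n + 1
      rw [hcolℓ j hj]
  · have h0 : t (fun q => u q 0) = c := hall 0
    rw [hcol0] at h0
    have : c.val = 0 := by rw [← h0]; rfl
    omega

lemma step (n m : ℕ) (hm : 2 ≤ m) (k : ℕ) (hk : k + 1 < 2 ^ n)
    (t : (Fin (m ^ 2 ^ n) → Fin (n + 2)) → Fin (n + 2))
    (htpoly : PolyA n m t) (htNU : IsNU t)
    (ih : ∀ σ' : Equiv.Perm (Fin (m ^ 2 ^ n)), t (fun q => vk n m k (σ' q)) ≠ 0)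
    (σ : Equiv.Perm (Fin (m ^ 2 ^ n))) :
    t (fun q => vk n m (k+1) (σ q)) ≠ 0 := by
  intro hc
  have hm1 : 1 ≤ m := by omega
  have hn : 0 < n := by
    by_contra h
    push_neg at h
    have hn0 : n = 0 := by omega
    rw [hn0] at hk
    simp at hk
  -- the lowest zero bit of k
  have hex : ∃ i0, Nat.testBit k i0 = false :=
    ⟨n, Nat.testBit_lt_two_pow (by omega)⟩
  obtain ⟨i, hi, hmin⟩ : ∃ i, Nat.testBit k i = false ∧ ∀ j, j < i → Nat.testBit k j = true := by
    refine ⟨Nat.find hex, Nat.find_spec hex, fun j hj => ?_⟩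
    have := Nat.find_min hex hj
    simpa using this
  have h2i : 0 < 2^i := Nat.two_pow_pos i
  have h2i1 : (2:ℕ)^(i+1) = 2^i + 2^i := by ring
  have hmodi : k % 2^i = 2^i - 1 := mod_of_bits k i hmin
  have hbit : k / 2^i % 2 = 0 := by
    rw [Nat.testBit_eq_decide_div_mod_eq] at hi
    simpa using hi
  have hkge : 2^i - 1 ≤ k := hmodi ▸ Nat.mod_le k (2^i)
  have hilt : i < n := by
    have h2 : (2:ℕ)^i < 2^n := by omega
    exact (Nat.pow_lt_pow_iff_right (by norm_num)).1 h2
  have hdm_i := Nat.div_add_mod' k (2^i)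
  have hdm_i1 := Nat.div_add_mod' k (2^(i+1))
  have hmodi1 : k % 2^(i+1) = 2^i - 1 := by
    have h := mod_pow_succ k i
    rw [hbit, mul_zero] at h
    omega
  have hdivk_i : k / 2^i * 2^i + 2^i = k + 1 := by omega
  have hdivk_i1 : k / 2^(i+1) * 2^(i+1) + 2^(i+1) = k + 1 + 2^i := by omega
  have hdvd : 2^i ∣ k + 1 := ⟨k / 2^i + 1, by rw [Nat.mul_comm, Nat.add_mul, Nat.one_mul]; omega⟩
  have hmodk1_i : (k+1) % 2^i = 0 := Nat.mod_eq_zero_of_dvd hdvd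
  have hdm1_i := Nat.div_add_mod' (k+1) (2^i)
  have hdivk1_i : (k+1) / 2^i * 2^i + 2^i = (k+1) + 2^i := by omega
  have hdiv1 : (k+1) / 2^i = k / 2^i + 1 := by
    apply Nat.eq_of_mul_eq_mul_right h2i
    rw [Nat.add_mul, Nat.one_mul]
    omega
  have hbit1 : (k+1) / 2^i % 2 = 1 := by rw [hdiv1]; omega
  have hmodk1_i1 : (k+1) % 2^(i+1) = 2^i := by
    have h := mod_pow_succ (k+1) i
    rw [hbit1, mul_one, hmodk1_i] at h
    omega
  have hdm1_i1 := Nat.div_add_mod' (k+1) (2^(i+1))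
  have hdivk1_i1 : (k+1) / 2^(i+1) * 2^(i+1) + 2^(i+1) = k + 1 + 2^i := by omega
  -- k + 1 + 2^i ≤ 2^n
  have hle2n : k + 1 + 2^i ≤ 2^n := by
    have hC : (2:ℕ)^n = 2^(i+1) * 2^(n-i-1) := by
      rw [← pow_add]; congr 1; omega
    have hXB : (k+1) / 2^(i+1) * 2^(i+1) = 2^(i+1) * ((k+1) / 2^(i+1)) :=
      Nat.mul_comm _ _
    have h2 : (k+1) / 2^(i+1) < 2^(n-i-1) := by
      by_contra hge
      push_neg at hge
      have h3 := Nat.mul_le_mul_left (2^(i+1)) hge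
      omega
    have h3 : 2^(i+1) * ((k+1) / 2^(i+1) + 1) ≤ 2^(i+1) * 2^(n-i-1) :=
      Nat.mul_le_mul_left _ (by omega)
    have h4 : 2^(i+1) * ((k+1) / 2^(i+1) + 1) = 2^(i+1) * ((k+1) / 2^(i+1)) + 2^(i+1) :=
      Nat.mul_succ _ _
    omega
  -- cum values
  have hcum_k_0 : cum m k 0 = m^(k+1) := cum_zero m k
  have hcum_k_i : cum m k i = m^(k+1) := by rw [cum_eq m hm1, hdivk_i]
  have hcum_k_i1 : cum m k (i+1) = m^(k+1+2^i) := by rw [cum_eq m hm1, hdivk_i1]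
  have hcum_k1_0 : cum m (k+1) 0 = m^(k+2) := cum_zero m (k+1)
  have hcum_k1_i : cum m (k+1) i = m^(k+1+2^i) := by rw [cum_eq m hm1, hdivk1_i]
  have hcum_k1_i1 : cum m (k+1) (i+1) = m^(k+1+2^i) := by rw [cum_eq m hm1, hdivk1_i1]
  have hcum_high : ∀ j, i+1 ≤ j → cum m k j = cum m (k+1) j := by
    intro j hj
    rw [cum_eq m hm1, cum_eq m hm1]
    have hnd : ¬ (2^j ∣ k+1) := by
      intro hd
      have hdd : 2^(i+1) ∣ k+1 := dvd_trans (pow_dvd_pow 2 hj) hd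
      have := Nat.mod_eq_zero_of_dvd hdd
      omega
    rw [Nat.succ_div_of_not_dvd hnd]
  have hL1 : 1 ≤ m^(k+1) := Nat.one_le_pow _ _ hm1
  have hmL : m^(k+2) = m^(k+1) * m := by rw [← pow_succ]
  have hML_le_R : m^(k+2) ≤ m^(k+1+2^i) := Nat.pow_le_pow_right hm1 (by omega)
  have hL_le_R : m^(k+1) ≤ m^(k+1+2^i) := Nat.pow_le_pow_right hm1 (by omega)
  have hR_le_N : m^(k+1+2^i) ≤ m^2^n := Nat.pow_le_pow_right hm1 hle2n
  -- vk facts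
  have FvkA : ∀ q : Fin (m^2^n), q.val < m^(k+1) → (vk n m k q).val = 0 := by
    intro q hq
    have := vk_le n m k 0 q (by rw [hcum_k_0]; omega)
    omega
  have FvkI : ∀ q : Fin (m^2^n), m^(k+1) ≤ q.val → q.val < m^(k+1+2^i) →
      (vk n m k q).val = i+1 := by
    intro q h1 h2
    have ha := vk_ge n m k i q hilt (by rw [hcum_k_i]; omega)
    have hb := vk_le n m k (i+1) q (by rw [hcum_k_i1]; omega)
    omega
  have Fvk1_le : ∀ q : Fin (m^2^n), q.val < m^(k+1+2^i) → (vk n m (k+1) q).val ≤ i := by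
    intro q hq
    exact vk_le n m (k+1) i q (by rw [hcum_k1_i]; omega)
  have Fvk1_0 : ∀ q : Fin (m^2^n), (vk n m (k+1) q).val = 0 → q.val < m^(k+2) := by
    intro q hq
    by_contra hge
    push_neg at hge
    have := vk_ge n m (k+1) 0 q hn (by rw [hcum_k1_0]; omega)
    omega
  have Fhigh : ∀ q : Fin (m^2^n), m^(k+1+2^i) ≤ q.val → vk n m k q = vk n m (k+1) q := by
    intro q hq
    apply Fin.ext
    rw [vk_card, vk_card]
    congr 1
    apply Finset.filter_congr
    intro j hj
    simp only [Finset.mem_range] at hj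
    rcases le_or_gt (i+1) j with hcase | hcase
    · rw [hcum_high j hcase]
    · have t1 : cum m k j ≤ q.val :=
        le_trans (le_trans (cum_mono m k (by omega : j ≤ i+1)) (le_of_eq hcum_k_i1)) hq
      have t2 : cum m (k+1) j ≤ q.val :=
        le_trans (le_trans (cum_mono m (k+1) (by omega : j ≤ i+1)) (le_of_eq hcum_k1_i1)) hq
      simp [t1, t2]
  have hi1n : ∀ q : Fin (m^2^n), m^(k+1+2^i) ≤ q.val → i+1 < n := by
    intro q hq
    have h1 : m^(k+1+2^i) < m^(2^n) := lt_of_le_of_lt hq q.isLt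
    have h2 : k+1+2^i < 2^n := (Nat.pow_lt_pow_iff_right (by omega : 1 < m)).1 h1
    have h4 : (2:ℕ)^(i+1) < 2^n := by omega
    exact (Nat.pow_lt_pow_iff_right (by norm_num : (1:ℕ) < 2)).1 h4
  have Fhigh2 : ∀ q : Fin (m^2^n), m^(k+1+2^i) ≤ q.val → i+2 ≤ (vk n m k q).val := by
    intro q hq
    have := vk_ge n m k (i+1) q (hi1n q hq) (by rw [hcum_k_i1]; omega)
    omega
  -- bounds for the block swap
  have hdL_R : ∀ ℓ : Fin (m+1), (ℓ.val - 1) * m^(k+1) + m^(k+1) ≤ m^(k+1+2^i) := by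
    intro ℓ
    have hval : ℓ.val ≤ m := by omega
    have he : (ℓ.val - 1) * m^(k+1) + m^(k+1) = (ℓ.val - 1 + 1) * m^(k+1) := by
      rw [Nat.add_mul, Nat.one_mul]
    rw [he]
    calc (ℓ.val - 1 + 1) * m^(k+1) ≤ m * m^(k+1) := Nat.mul_le_mul_right _ (by omega)
      _ = m^(k+1) * m := Nat.mul_comm _ _
      _ = m^(k+2) := by rw [← pow_succ]
      _ ≤ m^(k+1+2^i) := hML_le_R
  have hdL : ∀ ℓ : Fin (m+1), (ℓ.val - 1) * m^(k+1) + m^(k+1) ≤ m^2^n := by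
    intro ℓ
    exact le_trans (hdL_R ℓ) hR_le_N
  have hd0 : ∀ ℓ : Fin (m+1), (ℓ.val - 1) * m^(k+1) = 0 ∨ m^(k+1) ≤ (ℓ.val - 1) * m^(k+1) := by
    intro ℓ
    rcases Nat.eq_zero_or_pos (ℓ.val - 1) with h | h
    · left; rw [h, Nat.zero_mul]
    · right
      calc m^(k+1) = 1 * m^(k+1) := (Nat.one_mul _).symm
        _ ≤ (ℓ.val - 1) * m^(k+1) := Nat.mul_le_mul_right _ h
  -- the matrix
  set u : Fin (m^2^n) → Fin (m+1) → Fin (n+2) := fun q ℓ =>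
    if ℓ = 0 then vk n m (k+1) (σ q)
    else vk n m k ⟨bs (m^(k+1)) ((ℓ.val - 1) * m^(k+1)) (σ q).val,
           bs_lt _ _ _ _ (σ q).isLt (hdL ℓ)⟩ with hu
  have hrows : ∀ q, u q ∈ Srel n m i := by
    intro q
    rcases lt_or_ge (σ q).val (m^(k+1+2^i)) with hp | hp
    · left
      refine ⟨?_, ?_, ?_⟩
      · simp only [hu, if_pos rfl]
        exact Fvk1_le (σ q) hp
      · intro ℓ hℓ
        simp only [hu, if_neg hℓ]
        have hp'R : bs (m^(k+1)) ((ℓ.val - 1) * m^(k+1)) (σ q).val < m^(k+1+2^i) :=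
          bs_lt _ _ _ _ hp (hdL_R ℓ)
        rcases lt_or_ge (bs (m^(k+1)) ((ℓ.val - 1) * m^(k+1)) (σ q).val) (m^(k+1)) with hsm | hsm
        · left; exact FvkA _ hsm
        · right; exact FvkI _ hsm hp'R
      · rintro ⟨h0, hall⟩
        have h0' : (vk n m (k+1) (σ q)).val = 0 := by
          simpa only [hu, if_pos rfl] using h0
        have hpm : (σ q).val < m^(k+2) := Fvk1_0 (σ q) h0'
        have hdivlt : (σ q).val / m^(k+1) < m := by
          rw [Nat.div_lt_iff_lt_mul hL1]
          calc (σ q).val < m^(k+2) := hpm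
            _ = m^(k+1) * m := hmL
            _ = m * m^(k+1) := Nat.mul_comm _ _
        set ℓ0 : Fin (m+1) := ⟨(σ q).val / m^(k+1) + 1, by omega⟩ with hℓ0
        have hne : ℓ0 ≠ 0 := by
          intro h
          have := congrArg Fin.val h
          simp [hℓ0] at this
        have hval := hall ℓ0 hne
        have hdm := Nat.div_add_mod' (σ q).val (m^(k+1))
        have hmlt : (σ q).val % m^(k+1) < m^(k+1) := Nat.mod_lt _ hL1
        have hv : ℓ0.val - 1 = (σ q).val / m^(k+1) := by simp [hℓ0]
        have hd0' : (σ q).val / m^(k+1) * m^(k+1) = 0 ∨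
            m^(k+1) ≤ (σ q).val / m^(k+1) * m^(k+1) := by
          rcases Nat.eq_zero_or_pos ((σ q).val / m^(k+1)) with h | h
          · left; rw [h, Nat.zero_mul]
          · right
            calc m^(k+1) = 1 * m^(k+1) := (Nat.one_mul _).symm
              _ ≤ (σ q).val / m^(k+1) * m^(k+1) := Nat.mul_le_mul_right _ h
        have hbs : bs (m^(k+1)) ((ℓ0.val - 1) * m^(k+1)) (σ q).val
            = (σ q).val % m^(k+1) := by
          have hA : (σ q).val / m^(k+1) * m^(k+1) ≤ (σ q).val := Nat.div_mul_le_self _ _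
          have hB : (σ q).val < (σ q).val / m^(k+1) * m^(k+1) + m^(k+1) := by omega
          rw [hv, bs_mem _ _ _ hd0' hA hB]
          omega
        have hz : (u q ℓ0).val = 0 := by
          simp only [hu, if_neg hne]
          apply FvkA
          show bs (m^(k+1)) ((ℓ0.val - 1) * m^(k+1)) (σ q).val < m^(k+1)
          rw [hbs]
          exact hmlt
        omega
    · right
      refine ⟨vk n m (k+1) (σ q), ?_, ?_⟩
      · have h2 := Fhigh2 (σ q) hp
        rw [Fhigh (σ q) hp] at h2
        exact h2
      · intro j
        by_cases hj : j = 0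
        · rw [hj]; simp only [hu, if_pos rfl]
        · simp only [hu, if_neg hj]
          have hbs : bs (m^(k+1)) ((j.val - 1) * m^(k+1)) (σ q).val = (σ q).val := by
            apply bs_eq_self
            · exact le_trans (hdL_R j) hp
            · exact le_trans hL_le_R hp
          rw [← Fhigh (σ q) hp]
          congr 1
          exact Fin.ext hbs
  have hcomp := htpoly.1 i (le_of_lt hilt) u hrows
  have hcol0 : t (fun q => u q 0) = 0 := by
    have he : (fun q => u q 0) = fun q => vk n m (k+1) (σ q) := by
      funext q; simp only [hu, if_pos rfl]
    rw [he, hc]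
  have hcolℓ : ∀ ℓ : Fin (m+1), ℓ ≠ 0 → t (fun q => u q ℓ) ≠ 0 := by
    intro ℓ hℓ
    have he : (fun q => u q ℓ) = fun q => vk n m k
        ((σ.trans (blockSwap (m^2^n) (m^(k+1)) ((ℓ.val - 1) * m^(k+1)) (hdL ℓ) (hd0 ℓ))) q) := by
      funext q
      simp only [hu, if_neg hℓ]
      apply congrArg
      apply Fin.ext
      show bs (m^(k+1)) ((ℓ.val - 1) * m^(k+1)) (σ q).val
        = ((σ.trans (blockSwap (m^2^n) (m^(k+1)) ((ℓ.val - 1) * m^(k+1)) (hdL ℓ) (hd0 ℓ))) q).val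
      rw [Equiv.trans_apply, blockSwap_apply]
    rw [he]
    exact ih _
  simp only [Srel, Set.mem_setOf_eq] at hcomp
  rcases hcomp with ⟨-, h2, h3⟩ | ⟨c, hc2, hall⟩
  · apply h3
    constructor
    · show (t fun q => u q 0).val = 0
      rw [hcol0]
      rfl
    · intro j hj
      rcases h2 j hj with h | h
      · exfalso
        exact hcolℓ j hj (Fin.ext h)
      · exact h
  · have h0 : t (fun q => u q 0) = c := hall 0
    rw [hcol0] at h0
    have : c.val = 0 := by rw [← h0]; rfl
    omega

end Stmt6Aux

/-- If `t` is an NU polymorphism of `𝔄` of arity `m^(2^n)`, then for every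
`k < 2^n` and every permutation `σ` of the coordinates, `t` applied to the
`σ`-permuted tuple `v_k` differs from `a`. -/
theorem stmt6 (n m : ℕ) (hm : 2 ≤ m) (hnm : 0 < n ∨ 2 < m)
    (t : (Fin (m ^ 2 ^ n) → Fin (n + 2)) → Fin (n + 2))
    (htpoly : PolyA n m t) (htNU : IsNU t) :
    ∀ k < 2 ^ n, ∀ σ : Equiv.Perm (Fin (m ^ 2 ^ n)),
      t (fun q => vk n m k (σ q)) ≠ 0 := by
  intro k
  induction k with
  | zero =>
    intro _ σ
    exact Stmt6Aux.base n m hm t htpoly htNU σ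
  | succ k ih =>
    intro hk σ
    exact Stmt6Aux.step n m hm k hk t htpoly htNU (fun σ' => ih (by omega) σ') σ
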